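/- Let D ≥ 3 and write points of ℝ^D as (t, ρ, x) with x ∈ ℝ^{D−2}. For i = 1, 2 let F_i, G_i, H_i, J_i : ℝ^{D−2} → ℝ and K_i : ℝ^{D−2} → ℝ^{D−2} be smooth, and define the vector field ξ_i on ℝ^D with components ξ_i^t = F_i(x) + t G_i(x), ξ_i^ρ = ρ (H_i(x) + t J_i(x)), ξ_i^M = K_i^M(x). Then the Lie bracket [ξ_1, ξ_2] has components: [ξ_1,ξ_2]^t = (F_1 G_2 − G_1 F_2 + K_1^M ∂_M F_2 − K_2^M ∂_M F_1) + t (K_1^M ∂_M G_2 − K_2^M ∂_M G_1); [ξ_1,ξ_2]^ρ = ρ [ (F_1 J_2 − J_1 F_2 + K_1^M ∂_M H_2 − K_2^M ∂_M H_1) + t (G_1 J_2 − J_1 G_2 + K_1^M ∂_M J_2 − K_2^M ∂_M J_1) ]; [ξ_1,ξ_2]^M = K_1^N ∂_N K_2^M − K_2^N ∂_N K_1^M. -/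

import Mathlib

/-- The Lie bracket of vector fields on a normed space:
`[X,Y] p = (DY)_p (X p) − (DX)_p (Y p)`, which in linear coordinates is
`[X,Y]^μ = Σ_ν (X^ν ∂_ν Y^μ − Y^ν ∂_ν X^μ)`. -/
noncomputable def lieBracketVF {E : Type*} [NormedAddCommGroup E] [NormedSpace ℝ E]
    (X Y : E → E) : E → E :=
  fun p => fderiv ℝ Y p (X p) - fderiv ℝ X p (Y p)


section Aux

variable {X : Type*} [NormedAddCommGroup X] [NormedSpace ℝ X]

lemma fderiv_xi_apply (F G H J : X → ℝ) (K : X → X)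
    (hF : ContDiff ℝ (⊤ : ℕ∞) F) (hG : ContDiff ℝ (⊤ : ℕ∞) G) (hH : ContDiff ℝ (⊤ : ℕ∞) H)
    (hJ : ContDiff ℝ (⊤ : ℕ∞) J) (hK : ContDiff ℝ (⊤ : ℕ∞) K)
    (p v : ℝ × ℝ × X) :
    fderiv ℝ (fun q : ℝ × ℝ × X =>
        (F q.2.2 + q.1 * G q.2.2, q.2.1 * (H q.2.2 + q.1 * J q.2.2), K q.2.2)) p v =
      (G p.2.2 * v.1 + fderiv ℝ F p.2.2 v.2.2 + p.1 * fderiv ℝ G p.2.2 v.2.2,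
       v.2.1 * (H p.2.2 + p.1 * J p.2.2)
         + p.2.1 * (J p.2.2 * v.1 + fderiv ℝ H p.2.2 v.2.2 + p.1 * fderiv ℝ J p.2.2 v.2.2),
       fderiv ℝ K p.2.2 v.2.2) := by
  have hπ : HasFDerivAt (fun q : ℝ × ℝ × X => q.2.2)
      ((ContinuousLinearMap.snd ℝ ℝ X).comp (ContinuousLinearMap.snd ℝ ℝ (ℝ × X))) p :=
    ((ContinuousLinearMap.snd ℝ ℝ X).comp (ContinuousLinearMap.snd ℝ ℝ (ℝ × X))).hasFDerivAt
  have hρ : HasFDerivAt (fun q : ℝ × ℝ × X => q.2.1)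
      ((ContinuousLinearMap.fst ℝ ℝ X).comp (ContinuousLinearMap.snd ℝ ℝ (ℝ × X))) p :=
    ((ContinuousLinearMap.fst ℝ ℝ X).comp (ContinuousLinearMap.snd ℝ ℝ (ℝ × X))).hasFDerivAt
  have ht : HasFDerivAt (fun q : ℝ × ℝ × X => q.1) (ContinuousLinearMap.fst ℝ ℝ (ℝ × X)) p :=
    hasFDerivAt_fst
  have hF' := ((hF.differentiable (by simp)) p.2.2).hasFDerivAt.comp p hπ
  have hG' := ((hG.differentiable (by simp)) p.2.2).hasFDerivAt.comp p hπ
  have hH' := ((hH.differentiable (by simp)) p.2.2).hasFDerivAt.comp p hπ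
  have hJ' := ((hJ.differentiable (by simp)) p.2.2).hasFDerivAt.comp p hπ
  have hK' := ((hK.differentiable (by simp)) p.2.2).hasFDerivAt.comp p hπ
  have hMain := HasFDerivAt.prodMk (hF'.add (ht.mul hG')) (HasFDerivAt.prodMk (hρ.mul (hH'.add (ht.mul hJ'))) hK')
  simp only [Function.comp_def, Pi.add_apply, Pi.mul_apply] at hMain
  rw [hMain.fderiv]
  simp only [ContinuousLinearMap.prod_apply, ContinuousLinearMap.add_apply,
    ContinuousLinearMap.smul_apply, ContinuousLinearMap.comp_apply,
    ContinuousLinearMap.coe_fst', ContinuousLinearMap.coe_snd', smul_eq_mul]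
  refine Prod.ext ?_ (Prod.ext ?_ rfl) <;> simp <;> ring

end Aux

/-- Commutator of two vector fields of the form
`ξ_i = (F_i(x) + t G_i(x)) ∂_t + ρ (H_i(x) + t J_i(x)) ∂_ρ + K_i^M(x) ∂_M`
on `ℝ^D = ℝ_t × ℝ_ρ × ℝ^{D-2}` (Step 3 of Sec. V of the paper): the algebra 𝒜' of
translations, superdilatations and superrotations is closed under Lie brackets, with
`[ξ_1,ξ_2]^t = (F_1 G_2 − G_1 F_2 + K_1 ∂ F_2 − K_2 ∂ F_1) + t (K_1 ∂ G_2 − K_2 ∂ G_1)`,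
`[ξ_1,ξ_2]^ρ = ρ [(F_1 J_2 − J_1 F_2 + K_1 ∂ H_2 − K_2 ∂ H_1)
               + t (G_1 J_2 − J_1 G_2 + K_1 ∂ J_2 − K_2 ∂ J_1)]`,
`[ξ_1,ξ_2]^M = K_1^N ∂_N K_2^M − K_2^N ∂_N K_1^M`. -/
theorem lieBracket_translation_superdilatation_superrotation
    (D : ℕ) (hD : 3 ≤ D)
    (F₁ G₁ H₁ J₁ F₂ G₂ H₂ J₂ : (Fin (D - 2) → ℝ) → ℝ)
    (K₁ K₂ : (Fin (D - 2) → ℝ) → (Fin (D - 2) → ℝ))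
    (hF₁ : ContDiff ℝ (⊤ : ℕ∞) F₁) (hG₁ : ContDiff ℝ (⊤ : ℕ∞) G₁)
    (hH₁ : ContDiff ℝ (⊤ : ℕ∞) H₁) (hJ₁ : ContDiff ℝ (⊤ : ℕ∞) J₁)
    (hF₂ : ContDiff ℝ (⊤ : ℕ∞) F₂) (hG₂ : ContDiff ℝ (⊤ : ℕ∞) G₂)
    (hH₂ : ContDiff ℝ (⊤ : ℕ∞) H₂) (hJ₂ : ContDiff ℝ (⊤ : ℕ∞) J₂)
    (hK₁ : ContDiff ℝ (⊤ : ℕ∞) K₁) (hK₂ : ContDiff ℝ (⊤ : ℕ∞) K₂)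
    (ξ₁ ξ₂ : ℝ × ℝ × (Fin (D - 2) → ℝ) → ℝ × ℝ × (Fin (D - 2) → ℝ))
    (hξ₁ : ∀ p : ℝ × ℝ × (Fin (D - 2) → ℝ),
      ξ₁ p = (F₁ p.2.2 + p.1 * G₁ p.2.2, p.2.1 * (H₁ p.2.2 + p.1 * J₁ p.2.2), K₁ p.2.2))
    (hξ₂ : ∀ p : ℝ × ℝ × (Fin (D - 2) → ℝ),
      ξ₂ p = (F₂ p.2.2 + p.1 * G₂ p.2.2, p.2.1 * (H₂ p.2.2 + p.1 * J₂ p.2.2), K₂ p.2.2)) :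
    ∀ p : ℝ × ℝ × (Fin (D - 2) → ℝ),
      lieBracketVF ξ₁ ξ₂ p =
        ((F₁ p.2.2 * G₂ p.2.2 - G₁ p.2.2 * F₂ p.2.2
            + fderiv ℝ F₂ p.2.2 (K₁ p.2.2) - fderiv ℝ F₁ p.2.2 (K₂ p.2.2))
          + p.1 * (fderiv ℝ G₂ p.2.2 (K₁ p.2.2) - fderiv ℝ G₁ p.2.2 (K₂ p.2.2)),
         p.2.1 * ((F₁ p.2.2 * J₂ p.2.2 - J₁ p.2.2 * F₂ p.2.2
            + fderiv ℝ H₂ p.2.2 (K₁ p.2.2) - fderiv ℝ H₁ p.2.2 (K₂ p.2.2))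
          + p.1 * (G₁ p.2.2 * J₂ p.2.2 - J₁ p.2.2 * G₂ p.2.2
            + fderiv ℝ J₂ p.2.2 (K₁ p.2.2) - fderiv ℝ J₁ p.2.2 (K₂ p.2.2))),
         fderiv ℝ K₂ p.2.2 (K₁ p.2.2) - fderiv ℝ K₁ p.2.2 (K₂ p.2.2)) := by
  have e₁ : ξ₁ = fun q : ℝ × ℝ × (Fin (D - 2) → ℝ) =>
      (F₁ q.2.2 + q.1 * G₁ q.2.2, q.2.1 * (H₁ q.2.2 + q.1 * J₁ q.2.2), K₁ q.2.2) :=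
    funext hξ₁
  have e₂ : ξ₂ = fun q : ℝ × ℝ × (Fin (D - 2) → ℝ) =>
      (F₂ q.2.2 + q.1 * G₂ q.2.2, q.2.1 * (H₂ q.2.2 + q.1 * J₂ q.2.2), K₂ q.2.2) :=
    funext hξ₂
  intro p
  show fderiv ℝ ξ₂ p (ξ₁ p) - fderiv ℝ ξ₁ p (ξ₂ p) = _
  rw [e₁, e₂,
    fderiv_xi_apply F₂ G₂ H₂ J₂ K₂ hF₂ hG₂ hH₂ hJ₂ hK₂,
    fderiv_xi_apply F₁ G₁ H₁ J₁ K₁ hF₁ hG₁ hH₁ hJ₁ hK₁]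
  simp only [Prod.mk_sub_mk]
  refine Prod.ext ?_ (Prod.ext ?_ rfl) <;> simp <;> ring
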